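/- arXiv:1602.02292 — 2 statements merged into one kernel-verified Lean document; each statement's English description precedes it below -/
import Mathlib

section
/- Let R be a commutative ring that is also a ℚ-algebra, n ≥ 1, A an n×n matrix over R with A^a = 0 for some natural number a, and x ∈ R with x^b = 0 for some natural number b. Then for every natural number N ≥ a + b, ∑_{m=0}^{N} (1/m!)·trace((A + x • 1)^m) = (∑_{m=0}^{N} (1/m!)·trace(A^m)) · (∑_{r=0}^{N} (1/r!)·x^r), where trace of the 0-th power is n·1_R. -/
/-!
Both sides are traces of truncations of the nilpotent exponential series, and the truncation at
`N` is the full exponential once `N + 1` exceeds the nilpotency orders involved, since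
`(A + x • 1) ^ (a + b - 1) = 0`. As `A` commutes with the scalar matrix `x • 1`,
`exp (A + x • 1) = exp A * exp (x • 1) = exp x • exp A`, and taking traces finishes the proof.
-/

open Finset IsNilpotent

namespace Matrix

variable {ι R : Type*} [Fintype ι] [DecidableEq ι]

theorem trace_exp_eq_sum [Ring R] [Module ℚ R] {M : Matrix ι ι R} {k : ℕ} (h : M ^ k = 0) :
    trace (exp M) = ∑ i ∈ range k, (i.factorial : ℚ)⁻¹ • trace (M ^ i) := by
  rw [exp_eq_sum h, trace_sum]
  simp only [trace_smul]

theorem exp_smul_one [CommRing R] [Algebra ℚ R] {x : R} (hx : IsNilpotent x) :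
    exp (x • (1 : Matrix ι ι R)) = exp x • 1 := by
  rw [← Algebra.algebraMap_eq_smul_one, ← Algebra.algebraMap_eq_smul_one,
    map_exp hx (algebraMap R (Matrix ι ι R))]

theorem trace_exp_add_smul_one [CommRing R] [Algebra ℚ R] {A : Matrix ι ι R} {x : R}
    (hA : IsNilpotent A) (hx : IsNilpotent x) :
    trace (exp (A + x • 1)) = trace (exp A) * exp x := by
  have hxI : IsNilpotent (x • (1 : Matrix ι ι R)) := by
    obtain ⟨b, hb⟩ := hx
    exact ⟨b, by rw [smul_pow, hb, zero_smul]⟩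
  rw [IsNilpotent.exp_add_of_commute ((Commute.one_right A).smul_right x) hA hxI, exp_smul_one hx,
    mul_smul_one, trace_smul, smul_eq_mul, mul_comm]

end Matrix

theorem sum_inv_factorial_trace_pow_add_scalar_smul_one_general
    {R : Type*} [CommRing R] [Algebra ℚ R] {n : ℕ}
    (A : Matrix (Fin n) (Fin n) R) (x : R) (a b : ℕ)
    (hA : A ^ a = 0) (hx : x ^ b = 0) (N : ℕ) (hN : a + b ≤ N) :
    ∑ m ∈ Finset.range (N + 1),
        ((Nat.factorial m : ℚ)⁻¹) • Matrix.trace ((A + x • (1 : Matrix (Fin n) (Fin n) R)) ^ m)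
      = (∑ m ∈ Finset.range (N + 1), ((Nat.factorial m : ℚ)⁻¹) • Matrix.trace (A ^ m))
        * (∑ r ∈ Finset.range (N + 1), ((Nat.factorial r : ℚ)⁻¹) • x ^ r) := by
  have hxI : (x • (1 : Matrix (Fin n) (Fin n) R)) ^ b = 0 := by rw [smul_pow, hx, zero_smul]
  have hsum : (A + x • 1) ^ (N + 1) = 0 :=
    ((Commute.one_right A).smul_right x).add_pow_eq_zero_of_add_le_succ_of_pow_eq_zero hA hxI
      (by omega)
  rw [← Matrix.trace_exp_eq_sum hsum, ← Matrix.trace_exp_eq_sum (pow_eq_zero_of_le (by omega) hA),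
    ← exp_eq_sum (pow_eq_zero_of_le (by omega) hx)]
  exact Matrix.trace_exp_add_smul_one ⟨a, hA⟩ ⟨b, hx⟩

/-- Let `R` be a commutative ring that is also a `ℚ`-algebra, `n ≥ 1`,
`A` an `n×n` matrix over `R` with `A^a = 0`, and `x ∈ R` with `x^b = 0`.  Then for every
natural number `N ≥ a + b`,
`∑_{m=0}^{N} (1/m!)·trace((A + x • 1)^m)
    = (∑_{m=0}^{N} (1/m!)·trace(A^m)) · (∑_{r=0}^{N} (1/r!)·x^r)`,
where the trace of the `0`-th power is `n·1_R`. -/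
theorem sum_inv_factorial_trace_pow_add_scalar_smul_one
    {R : Type*} [CommRing R] [Algebra ℚ R] {n : ℕ} (hn : 1 ≤ n)
    (A : Matrix (Fin n) (Fin n) R) (x : R) (a b : ℕ)
    (hA : A ^ a = 0) (hx : x ^ b = 0) (N : ℕ) (hN : a + b ≤ N) :
    ∑ m ∈ Finset.range (N + 1),
        ((Nat.factorial m : ℚ)⁻¹) • Matrix.trace ((A + x • (1 : Matrix (Fin n) (Fin n) R)) ^ m)
      = (∑ m ∈ Finset.range (N + 1), ((Nat.factorial m : ℚ)⁻¹) • Matrix.trace (A ^ m))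
        * (∑ r ∈ Finset.range (N + 1), ((Nat.factorial r : ℚ)⁻¹) • x ^ r) :=
  sum_inv_factorial_trace_pow_add_scalar_smul_one_general A x a b hA hx N hN
end

section
/- Let S be a (not necessarily commutative) ring, T ⊆ S a subring, and d : T → S an additive map satisfying d(xy) = d(x)·y + x·d(y) for all x, y ∈ T. Let g₁, g₂, g₃ ∈ T be units of S, let λ ∈ T be a unit of S that is central in S and such that d(λ) is central in S, and suppose g₃·g₁ = g₂·λ. Let Γ_i, Γ_j, Γ_k ∈ S and let a₁, a₂, a₃ ∈ S be central elements satisfying Γ_i − g₁⁻¹Γ_j g₁ − g₁⁻¹·d(g₁) = −a₁, Γ_i − g₂⁻¹Γ_k g₂ − g₂⁻¹·d(g₂) = −a₂, and Γ_j − g₃⁻¹Γ_k g₃ − g₃⁻¹·d(g₃) = −a₃. Then a₁ − a₂ + a₃ = λ⁻¹·d(λ). -/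
/-- Let `S` be a (not necessarily commutative) ring, `T ⊆ S` a subring,
and `d : T → S` an additive map satisfying the Leibniz rule `d(xy) = d(x)·y + x·d(y)` for
`x, y ∈ T`.  Let `g₁, g₂, g₃ ∈ T` be units of `S`, let `λ ∈ T` be a unit of `S` that is
central in `S` and such that `d(λ)` is central in `S`, and suppose `g₃·g₁ = g₂·λ`.
Let `Γᵢ, Γⱼ, Γₖ ∈ S` and let `a₁, a₂, a₃ ∈ S` be central elements satisfying
`Γᵢ − g₁⁻¹Γⱼg₁ − g₁⁻¹·d(g₁) = −a₁`, `Γᵢ − g₂⁻¹Γₖg₂ − g₂⁻¹·d(g₂) = −a₂`, and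
`Γⱼ − g₃⁻¹Γₖg₃ − g₃⁻¹·d(g₃) = −a₃`.  Then `a₁ − a₂ + a₃ = λ⁻¹·d(λ)`. -/
theorem connection_cocycle_scalar_identity
    {S : Type*} [Ring S] (T : Subring S) (d : T →+ S)
    (hLeibniz : ∀ x y : T, d (x * y) = d x * (y : S) + (x : S) * d y)
    (g₁ g₂ g₃ lam : T)
    (hg₁ : IsUnit (g₁ : S)) (hg₂ : IsUnit (g₂ : S)) (hg₃ : IsUnit (g₃ : S))
    (hlam : IsUnit (lam : S))
    (hlam_center : (lam : S) ∈ Set.center S) (hdlam_center : d lam ∈ Set.center S)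
    (hcocycle : (g₃ : S) * (g₁ : S) = (g₂ : S) * (lam : S))
    (Γi Γj Γk a₁ a₂ a₃ : S)
    (ha₁ : a₁ ∈ Set.center S) (ha₂ : a₂ ∈ Set.center S) (ha₃ : a₃ ∈ Set.center S)
    (h₁ : Γi - Ring.inverse (g₁ : S) * Γj * (g₁ : S) - Ring.inverse (g₁ : S) * d g₁ = -a₁)
    (h₂ : Γi - Ring.inverse (g₂ : S) * Γk * (g₂ : S) - Ring.inverse (g₂ : S) * d g₂ = -a₂)
    (h₃ : Γj - Ring.inverse (g₃ : S) * Γk * (g₃ : S) - Ring.inverse (g₃ : S) * d g₃ = -a₃) :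
    a₁ - a₂ + a₃ = Ring.inverse (lam : S) * d lam := by
  have c₁ : ∀ y : S, Ring.inverse (g₁ : S) * ((g₁ : S) * y) = y :=
    fun y => Ring.inverse_mul_cancel_left _ y hg₁
  have c₂ : ∀ y : S, Ring.inverse (g₂ : S) * ((g₂ : S) * y) = y :=
    fun y => Ring.inverse_mul_cancel_left _ y hg₂
  have c₂' : ∀ y : S, (g₂ : S) * (Ring.inverse (g₂ : S) * y) = y :=
    fun y => Ring.mul_inverse_cancel_left _ y hg₂
  have c₃ : ∀ y : S, Ring.inverse (g₃ : S) * ((g₃ : S) * y) = y :=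
    fun y => Ring.inverse_mul_cancel_left _ y hg₃
  have cL : ∀ y : S, Ring.inverse (lam : S) * ((lam : S) * y) = y :=
    fun y => Ring.inverse_mul_cancel_left _ y hlam
  have e₁ : Ring.inverse (g₁ : S) * (g₁ : S) = 1 := Ring.inverse_mul_cancel _ hg₁
  have e₂' : (g₂ : S) * Ring.inverse (g₂ : S) = 1 := Ring.mul_inverse_cancel _ hg₂
  have lcomm : ∀ b : S, (lam : S) * b = b * (lam : S) := fun b => hlam_center.comm b
  -- the combined inverse
  have h1 : (Ring.inverse (g₁ : S) * Ring.inverse (g₃ : S)) * ((g₃ : S) * (g₁ : S)) = 1 := by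
    rw [mul_assoc, c₃, e₁]
  have h2 : ((g₂ : S) * (lam : S)) * (Ring.inverse (lam : S) * Ring.inverse (g₂ : S)) = 1 := by
    rw [mul_assoc, ← mul_assoc (lam : S), Ring.mul_inverse_cancel _ hlam, one_mul, e₂']
  have hinv : Ring.inverse (g₁ : S) * Ring.inverse (g₃ : S)
      = Ring.inverse (lam : S) * Ring.inverse (g₂ : S) := by
    calc Ring.inverse (g₁ : S) * Ring.inverse (g₃ : S)
        = (Ring.inverse (g₁ : S) * Ring.inverse (g₃ : S))
            * (((g₂ : S) * (lam : S)) * (Ring.inverse (lam : S) * Ring.inverse (g₂ : S))) := by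
          rw [h2, mul_one]
      _ = ((Ring.inverse (g₁ : S) * Ring.inverse (g₃ : S)) * ((g₂ : S) * (lam : S)))
            * (Ring.inverse (lam : S) * Ring.inverse (g₂ : S)) := by simp only [mul_assoc]
      _ = ((Ring.inverse (g₁ : S) * Ring.inverse (g₃ : S)) * ((g₃ : S) * (g₁ : S)))
            * (Ring.inverse (lam : S) * Ring.inverse (g₂ : S)) := by rw [hcocycle]
      _ = Ring.inverse (lam : S) * Ring.inverse (g₂ : S) := by rw [h1, one_mul]
  have hpair : ∀ X : S, Ring.inverse (g₁ : S) * (Ring.inverse (g₃ : S) * X)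
      = Ring.inverse (lam : S) * (Ring.inverse (g₂ : S) * X) := by
    intro X; rw [← mul_assoc, ← mul_assoc, hinv]
  -- cocycle relation inside T
  have hTcoc : g₃ * g₁ = g₂ * lam := by
    ext; push_cast; exact hcocycle
  have hLeib : d g₃ * (g₁ : S) + (g₃ : S) * d g₁ = d g₂ * (lam : S) + (g₂ : S) * d lam := by
    rw [← hLeibniz, ← hLeibniz, hTcoc]
  -- the derivative identity
  have hB : Ring.inverse (g₁ : S) * (Ring.inverse (g₃ : S) * (d g₃ * (g₁ : S)))
      + Ring.inverse (g₁ : S) * d g₁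
      = Ring.inverse (g₂ : S) * d g₂ + Ring.inverse (lam : S) * d lam := by
    have h := congrArg (fun z => Ring.inverse (g₁ : S) * (Ring.inverse (g₃ : S) * z)) hLeib
    simp only [mul_add, c₃] at h
    rw [h, hpair, hpair]
    congr 1
    · calc Ring.inverse (lam : S) * (Ring.inverse (g₂ : S) * (d g₂ * (lam : S)))
          = Ring.inverse (lam : S) * (Ring.inverse (g₂ : S) * d g₂ * (lam : S)) := by
            rw [mul_assoc (Ring.inverse (g₂ : S))]
        _ = Ring.inverse (lam : S) * ((lam : S) * (Ring.inverse (g₂ : S) * d g₂)) := by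
            rw [← lcomm]
        _ = Ring.inverse (g₂ : S) * d g₂ := cL _
    · rw [c₂]
  -- the conjugation identity
  have hA : Ring.inverse (g₁ : S) * (Ring.inverse (g₃ : S) * (Γk * ((g₃ : S) * (g₁ : S))))
      = Ring.inverse (g₂ : S) * Γk * (g₂ : S) := by
    rw [hcocycle, hpair]
    calc Ring.inverse (lam : S) * (Ring.inverse (g₂ : S) * (Γk * ((g₂ : S) * (lam : S))))
        = Ring.inverse (lam : S) * (Ring.inverse (g₂ : S) * Γk * (g₂ : S) * (lam : S)) := by
          rw [mul_assoc (Ring.inverse (g₂ : S) * Γk), mul_assoc (Ring.inverse (g₂ : S))]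
      _ = Ring.inverse (lam : S) * ((lam : S) * (Ring.inverse (g₂ : S) * Γk * (g₂ : S))) := by
          rw [← lcomm]
      _ = Ring.inverse (g₂ : S) * Γk * (g₂ : S) := cL _
  -- rearrange the hypotheses
  rw [sub_eq_iff_eq_add, sub_eq_iff_eq_add] at h₁ h₂ h₃
  -- expand Γj inside h₁ using h₃
  have expand : Ring.inverse (g₁ : S) * Γj * (g₁ : S)
      = -a₃ + Ring.inverse (g₁ : S) * (Ring.inverse (g₃ : S) * (d g₃ * (g₁ : S)))
          + Ring.inverse (g₁ : S) * (Ring.inverse (g₃ : S) * (Γk * ((g₃ : S) * (g₁ : S)))) := by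
    rw [h₃]
    have ha₃c : Ring.inverse (g₁ : S) * (-a₃ * (g₁ : S)) = -a₃ := by
      rw [(Set.neg_mem_center ha₃).comm (g₁ : S), c₁]
    calc Ring.inverse (g₁ : S) * (-a₃ + Ring.inverse (g₃ : S) * d g₃
            + Ring.inverse (g₃ : S) * Γk * (g₃ : S)) * (g₁ : S)
        = Ring.inverse (g₁ : S) * (-a₃ * (g₁ : S))
            + Ring.inverse (g₁ : S) * (Ring.inverse (g₃ : S) * (d g₃ * (g₁ : S)))
            + Ring.inverse (g₁ : S) * (Ring.inverse (g₃ : S) * (Γk * ((g₃ : S) * (g₁ : S)))) := by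
          simp only [mul_add, add_mul, mul_assoc]
      _ = _ := by rw [ha₃c]
  have keq : -a₁ + Ring.inverse (g₁ : S) * d g₁
      + (-a₃ + Ring.inverse (g₁ : S) * (Ring.inverse (g₃ : S) * (d g₃ * (g₁ : S)))
          + Ring.inverse (g₁ : S) * (Ring.inverse (g₃ : S) * (Γk * ((g₃ : S) * (g₁ : S)))))
      = -a₂ + Ring.inverse (g₂ : S) * d g₂ + Ring.inverse (g₂ : S) * Γk * (g₂ : S) := by
    rw [← expand, ← h₁, h₂]
  rw [hA] at keq
  have h' : -a₁ + -a₃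
      + (Ring.inverse (g₁ : S) * (Ring.inverse (g₃ : S) * (d g₃ * (g₁ : S)))
          + Ring.inverse (g₁ : S) * d g₁)
      = -a₂ + Ring.inverse (g₂ : S) * d g₂ := by
    calc -a₁ + -a₃
        + (Ring.inverse (g₁ : S) * (Ring.inverse (g₃ : S) * (d g₃ * (g₁ : S)))
            + Ring.inverse (g₁ : S) * d g₁)
        = (-a₁ + Ring.inverse (g₁ : S) * d g₁
            + (-a₃ + Ring.inverse (g₁ : S) * (Ring.inverse (g₃ : S) * (d g₃ * (g₁ : S)))
                + Ring.inverse (g₂ : S) * Γk * (g₂ : S)))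
            - Ring.inverse (g₂ : S) * Γk * (g₂ : S) := by abel
      _ = (-a₂ + Ring.inverse (g₂ : S) * d g₂ + Ring.inverse (g₂ : S) * Γk * (g₂ : S))
            - Ring.inverse (g₂ : S) * Γk * (g₂ : S) := by rw [keq]
      _ = -a₂ + Ring.inverse (g₂ : S) * d g₂ := by abel
  rw [hB] at h'
  have h'' : a₁ - a₂ + a₃ - Ring.inverse (lam : S) * d lam = 0 := by
    calc a₁ - a₂ + a₃ - Ring.inverse (lam : S) * d lam
        = (-a₂ + Ring.inverse (g₂ : S) * d g₂)
            - (-a₁ + -a₃ + (Ring.inverse (g₂ : S) * d g₂ + Ring.inverse (lam : S) * d lam)) := by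
          abel
      _ = 0 := by rw [h', sub_self]
  exact sub_eq_zero.mp h''
end
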